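/- Let U₁, U₂, a, b : ℝ² → ℝ be smooth compactly supported functions satisfying the divergence-free relations ∂_x U₁ + ∂_y U₂ = 0 and ∂_x a + ∂_y b = 0. Then ∫_{ℝ²} U₂ · (∂_y a) · (∂_y∂_y a) dx = −∫_{ℝ²} (∂_y U₁) · (∂_y a) · (∂_y b) dx − ∫_{ℝ²} U₁ · (∂_y∂_y a) · (∂_y b) dx. -/

import Mathlib

open MeasureTheory

/-- Partial derivative in the `i`-th coordinate direction. -/
noncomputable def pd (i : Fin 2) (f : EuclideanSpace ℝ (Fin 2) → ℝ)
    (x : EuclideanSpace ℝ (Fin 2)) : ℝ :=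
  fderiv ℝ f x (EuclideanSpace.single i 1)

section Aux

variable {f g : EuclideanSpace ℝ (Fin 2) → ℝ} {i : Fin 2}

lemma pd_contDiff (hf : ContDiff ℝ (⊤ : ℕ∞) f) (i : Fin 2) : ContDiff ℝ (⊤ : ℕ∞) (pd i f) := by
  have h1 : ContDiff ℝ (⊤ : ℕ∞) (fderiv ℝ f) := hf.fderiv_right (by simp)
  exact h1.clm_apply contDiff_const

lemma pd_hcs (hf : HasCompactSupport f) (i : Fin 2) : HasCompactSupport (pd i f) :=
  hf.fderiv_apply ℝ _

lemma pd_mul (hf : ContDiff ℝ (⊤ : ℕ∞) f) (hg : ContDiff ℝ (⊤ : ℕ∞) g) (i : Fin 2)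
    (x : EuclideanSpace ℝ (Fin 2)) :
    pd i (fun y => f y * g y) x = pd i f x * g x + f x * pd i g x := by
  unfold pd
  rw [fderiv_fun_mul (hf.differentiable (by simp) x) (hg.differentiable (by simp) x)]
  simp [smul_eq_mul]
  ring

lemma pd_neg (i : Fin 2) (x : EuclideanSpace ℝ (Fin 2)) :
    pd i (fun y => -f y) x = -pd i f x := by
  unfold pd
  rw [fderiv_fun_neg]
  simp

lemma pd_comm (hf : ContDiff ℝ (⊤ : ℕ∞) f) (x : EuclideanSpace ℝ (Fin 2)) :
    pd 0 (pd 1 f) x = pd 1 (pd 0 f) x := by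
  have hsymm : IsSymmSndFDerivAt ℝ f x := hf.contDiffAt.isSymmSndFDerivAt (by rw [minSmoothness_of_isRCLikeNormedField, ← WithTop.coe_ofNat]; exact WithTop.coe_le_coe.mpr le_top)
  have hdiff : DifferentiableAt ℝ (fderiv ℝ f) x :=
    ((hf.fderiv_right (m := 1) (by rw [one_add_one_eq_two, ← WithTop.coe_ofNat]; exact WithTop.coe_le_coe.mpr le_top)).differentiable one_ne_zero) x
  have key : ∀ i j : Fin 2, pd i (pd j f) x =
      fderiv ℝ (fderiv ℝ f) x (EuclideanSpace.single i 1) (EuclideanSpace.single j 1) := by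
    intro i j
    unfold pd
    rw [fderiv_clm_apply hdiff (differentiableAt_const _)]
    simp
  rw [key 0 1, key 1 0, hsymm.eq]

lemma ibp (hf : ContDiff ℝ (⊤ : ℕ∞) f) (hcf : HasCompactSupport f)
    (hg : ContDiff ℝ (⊤ : ℕ∞) g) (hcg : HasCompactSupport g) (i : Fin 2) :
    ∫ x, pd i f x * g x = -∫ x, f x * pd i g x := by
  obtain ⟨C, hC⟩ := ContDiff.lipschitzWith_of_hasCompactSupport hcf hf (by simp)
  obtain ⟨D, hD⟩ := ContDiff.lipschitzWith_of_hasCompactSupport hcg hg (by simp)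
  have key := hC.integral_lineDeriv_mul_eq hD hcg (μ := volume) (EuclideanSpace.single i 1)
  have e1 : ∀ x, lineDeriv ℝ f x (EuclideanSpace.single i 1) = pd i f x := fun x => by
    rw [(hf.differentiable (by simp) x).lineDeriv_eq_fderiv]; rfl
  have e2 : ∀ x, lineDeriv ℝ g x (-EuclideanSpace.single i 1) = -pd i g x := fun x => by
    rw [(hg.differentiable (by simp) x).lineDeriv_eq_fderiv]; simp [pd]
  simp_rw [e1, e2] at key
  rw [key]
  rw [show (fun x => -pd i g x * f x) = fun x => -(f x * pd i g x) by ext x; ring]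
  exact integral_neg _

end Aux

set_option maxHeartbeats 1000000 in
/-- Integration-by-parts identities for the term `J_{1b3}` in the proof of
Theorem 4.2: if `∂_x U₁ + ∂_y U₂ = 0` and `∂_x a + ∂_y b = 0`, then
`∫ U₂ (∂_y a)(∂_y∂_y a) = -∫ (∂_y U₁)(∂_y a)(∂_y b) - ∫ U₁ (∂_y∂_y a)(∂_y b)`. -/
theorem J1b3_integration_by_parts
    (U₁ U₂ a b : EuclideanSpace ℝ (Fin 2) → ℝ)
    (hU₁ : ContDiff ℝ (⊤ : ℕ∞) U₁) (hU₂ : ContDiff ℝ (⊤ : ℕ∞) U₂)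
    (ha : ContDiff ℝ (⊤ : ℕ∞) a) (hb : ContDiff ℝ (⊤ : ℕ∞) b)
    (hcU₁ : HasCompactSupport U₁) (hcU₂ : HasCompactSupport U₂)
    (hca : HasCompactSupport a) (hcb : HasCompactSupport b)
    (hdivU : ∀ x, pd 0 U₁ x + pd 1 U₂ x = 0)
    (hdivab : ∀ x, pd 0 a x + pd 1 b x = 0) :
    ∫ x, U₂ x * pd 1 a x * pd 1 (pd 1 a) x =
      -(∫ x, pd 1 U₁ x * pd 1 a x * pd 1 b x)
        - (∫ x, U₁ x * pd 1 (pd 1 a) x * pd 1 b x) := by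
  have hDa : ContDiff ℝ (⊤ : ℕ∞) (pd 1 a) := pd_contDiff ha 1
  have hcDa : HasCompactSupport (pd 1 a) := pd_hcs hca 1
  have hDb : ContDiff ℝ (⊤ : ℕ∞) (pd 1 b) := pd_contDiff hb 1
  have hcDb : HasCompactSupport (pd 1 b) := pd_hcs hcb 1
  have hDDa : ContDiff ℝ (⊤ : ℕ∞) (pd 1 (pd 1 a)) := pd_contDiff hDa 1
  have hDDb : ContDiff ℝ (⊤ : ℕ∞) (pd 1 (pd 1 b)) := pd_contDiff hDb 1
  have hDU₁ : ContDiff ℝ (⊤ : ℕ∞) (pd 1 U₁) := pd_contDiff hU₁ 1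
  have hcDU₁ : HasCompactSupport (pd 1 U₁) := pd_hcs hcU₁ 1
  have hDU₂ : ContDiff ℝ (⊤ : ℕ∞) (pd 1 U₂) := pd_contDiff hU₂ 1
  have hcDU₂ : HasCompactSupport (pd 1 U₂) := pd_hcs hcU₂ 1
  -- commutation / divergence-free identity: ∂₀ (∂₁ a) = -∂₁(∂₁ b)
  have hcomm : ∀ x, pd 0 (pd 1 a) x = -pd 1 (pd 1 b) x := by
    intro x
    rw [pd_comm ha x]
    have hfun : pd 0 a = fun y => -pd 1 b y := funext fun y => by
      have := hdivab y; linarith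
    rw [hfun, pd_neg]
  -- Step 1
  have h1 : ∫ x, pd 1 (fun y => U₂ y * pd 1 a y) x * pd 1 a x =
      -∫ x, (U₂ x * pd 1 a x) * pd 1 (pd 1 a) x :=
    ibp (hU₂.mul hDa) (hcU₂.mul_right) hDa hcDa 1
  have e1 : ∀ x, pd 1 (fun y => U₂ y * pd 1 a y) x * pd 1 a x =
      -(pd 0 U₁ x * (pd 1 a x * pd 1 a x)) + U₂ x * pd 1 a x * pd 1 (pd 1 a) x := by
    intro x
    rw [pd_mul hU₂ hDa 1 x]
    have h := hdivU x
    linear_combination (pd 1 a x * pd 1 a x) * h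
  simp_rw [e1] at h1
  have I1 : Integrable (fun x => -(pd 0 U₁ x * (pd 1 a x * pd 1 a x))) := by
    have : Integrable (fun x => pd 0 U₁ x * (pd 1 a x * pd 1 a x)) := by
      apply Continuous.integrable_of_hasCompactSupport
      · exact (pd_contDiff hU₁ 0).continuous.mul (hDa.continuous.mul hDa.continuous)
      · exact (pd_hcs hcU₁ 0).mul_right
    exact this.neg
  have I2 : Integrable (fun x => U₂ x * pd 1 a x * pd 1 (pd 1 a) x) := by
    apply Continuous.integrable_of_hasCompactSupport
    · exact (hU₂.continuous.mul hDa.continuous).mul hDDa.continuous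
    · exact (hcU₂.mul_right).mul_right
  rw [integral_add I1 I2, integral_neg] at h1
  -- Step 2
  have h2 : ∫ x, pd 0 U₁ x * (pd 1 a x * pd 1 a x) =
      -∫ x, U₁ x * pd 0 (fun y => pd 1 a y * pd 1 a y) x :=
    ibp hU₁ hcU₁ (hDa.mul hDa) (hcDa.mul_right) 0
  have e2 : ∀ x, U₁ x * pd 0 (fun y => pd 1 a y * pd 1 a y) x =
      -(2 * (U₁ x * pd 1 a x * pd 1 (pd 1 b) x)) := by
    intro x
    rw [pd_mul hDa hDa 0 x, hcomm x]
    ring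
  simp_rw [e2, integral_neg, neg_neg, integral_const_mul] at h2
  -- Step 3
  have h3 : ∫ x, pd 1 (fun y => U₁ y * pd 1 a y) x * pd 1 b x =
      -∫ x, (U₁ x * pd 1 a x) * pd 1 (pd 1 b) x :=
    ibp (hU₁.mul hDa) (hcU₁.mul_right) hDb hcDb 1
  have e3 : ∀ x, pd 1 (fun y => U₁ y * pd 1 a y) x * pd 1 b x =
      pd 1 U₁ x * pd 1 a x * pd 1 b x + U₁ x * pd 1 (pd 1 a) x * pd 1 b x := by
    intro x
    rw [pd_mul hU₁ hDa 1 x]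
    ring
  simp_rw [e3] at h3
  have I3 : Integrable (fun x => pd 1 U₁ x * pd 1 a x * pd 1 b x) := by
    apply Continuous.integrable_of_hasCompactSupport
    · exact (hDU₁.continuous.mul hDa.continuous).mul hDb.continuous
    · exact (hcDU₁.mul_right).mul_right
  have I4 : Integrable (fun x => U₁ x * pd 1 (pd 1 a) x * pd 1 b x) := by
    apply Continuous.integrable_of_hasCompactSupport
    · exact (hU₁.continuous.mul hDDa.continuous).mul hDb.continuous
    · exact (hcU₁.mul_right).mul_right
  rw [integral_add I3 I4] at h3
  linarith
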